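/- There exists a group homomorphism Φ : W → Out(F) sending the Coxeter generator x to [L], y to [R], z to [τ], and w to [τ ∘ χ²]. Equivalently, these four outer classes satisfy the Coxeter relations of M: each of [L], [R], [τ], [τ ∘ χ²] squares to the identity in Out(F), ([L]·[R])² = 1, and ([L]·[τ])⁴ = ([R]·[τ])⁴ = ([L]·[τ∘χ²])⁴ = ([R]·[τ∘χ²])⁴ = 1. -/

import Mathlib

/-!
Let `F = ⟨a, b, t ∣ a² = b² = 1⟩ ≅ C₂ * C₂ * ℤ`, realized as a `PresentedGroup`.
-/

namespace ABZ

/-- Generators of the presentation `⟨a, b, t ∣ a² = b² = 1⟩`. -/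
inductive Gen : Type
  | a | b | t
  deriving DecidableEq

open Gen

/-- The relators `a²` and `b²`. -/
def rels : Set (FreeGroup Gen) := {FreeGroup.of a ^ 2, FreeGroup.of b ^ 2}

/-- The group `F = ⟨a, b, t ∣ a² = b² = 1⟩ ≅ C₂ * C₂ * ℤ`. -/
abbrev F : Type := PresentedGroup rels

/-- The generator `a` of `F`. -/
def ga : F := PresentedGroup.of a
/-- The generator `b` of `F`. -/
def gb : F := PresentedGroup.of b
/-- The generator `t` of `F`. -/
def gt : F := PresentedGroup.of t

/-- The inner automorphisms form a normal subgroup of `MulAut G`. -/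
instance innNormal (G : Type*) [Group G] : ((MulAut.conj : G →* MulAut G).range).Normal := by
  constructor
  rintro x ⟨g, rfl⟩ f
  refine ⟨f g, ?_⟩
  ext y
  simp [MulAut.conj_apply, mul_assoc, map_mul]

/-- The outer automorphism group `Out(G) = MulAut G ⧸ Inn(G)`. -/
abbrev Out (G : Type*) [Group G] : Type _ := MulAut G ⧸ (MulAut.conj : G →* MulAut G).range

/-- The outer class `[φ]` of an automorphism `φ`. -/
def out {G : Type*} [Group G] (φ : MulAut G) : Out G := QuotientGroup.mk φ

/-- `σ : a ↦ b, b ↦ a, t ↦ t`. -/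
def IsSigma (σ : MulAut F) : Prop := σ ga = gb ∧ σ gb = ga ∧ σ gt = gt
/-- `τ : a ↦ a, b ↦ b, t ↦ t⁻¹`. -/
def IsTau (τ : MulAut F) : Prop := τ ga = ga ∧ τ gb = gb ∧ τ gt = gt⁻¹
/-- `L : a ↦ a, b ↦ b, t ↦ a·t`. -/
def IsL (L : MulAut F) : Prop := L ga = ga ∧ L gb = gb ∧ L gt = ga * gt
/-- `R : a ↦ a, b ↦ b, t ↦ t·b`. -/
def IsR (R : MulAut F) : Prop := R ga = ga ∧ R gb = gb ∧ R gt = gt * gb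
/-- `χ : a ↦ a, b ↦ t⁻¹·b·t, t ↦ t`. -/
def IsChi (χ : MulAut F) : Prop := χ ga = ga ∧ χ gb = gt⁻¹ * gb * gt ∧ χ gt = gt

/-- Index set `{x, y, z, w}` for the Coxeter matrix. -/
inductive Idx : Type
  | x | y | z | w
  deriving DecidableEq

instance instFintypeIdx : Fintype Idx :=
  ⟨{Idx.x, Idx.y, Idx.z, Idx.w}, fun i => by cases i <;> simp⟩

/-- The entries of the Coxeter matrix: `M(x,y) = 2`,
`M(x,z) = M(y,z) = M(x,w) = M(y,w) = 4`, `M(z,w) = 0`, diagonal `1`. -/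
def Mfun : Idx → Idx → ℕ
  | .x, .x => 1 | .y, .y => 1 | .z, .z => 1 | .w, .w => 1
  | .x, .y => 2 | .y, .x => 2
  | .x, .z => 4 | .z, .x => 4
  | .y, .z => 4 | .z, .y => 4
  | .x, .w => 4 | .w, .x => 4
  | .y, .w => 4 | .w, .y => 4
  | .z, .w => 0 | .w, .z => 0

/-- The Coxeter matrix `M`. -/
def CoxM : CoxeterMatrix Idx where
  M := Matrix.of Mfun
  isSymm := by decide
  diagonal := by decide
  off_diagonal := by intro i i'; cases i <;> cases i' <;> decide

/-- The Coxeter group `W` of `M`, so that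
`W = ⟨x, y, z, w ∣ x² = y² = z² = w² = (xy)² = (xz)⁴ = (yz)⁴ = (xw)⁴ = (yw)⁴ = 1⟩`. -/
abbrev W : Type _ := CoxM.Group

/-!
All the relations already hold in `Aut(F)`, so `Φ` is the lift `W → Aut(F)` given by the Coxeter
presentation, followed by the quotient map to `Out(F)`. Every automorphism involved fixes `a`;
`L`, `R`, `τ` also fix `b`, while `ω = τχ²` sends `b ↦ t²bt⁻²` and `t ↦ t⁻¹`. Each relation is then
checked on the generators using `a² = b² = 1`; for instance `(Lτ)²` fixes `a`, `b` and sends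
`t ↦ ata`, whence `(Lτ)⁴ = 1`.
-/

end ABZ

theorem mul_pow_eq_one_comm {G : Type*} [Group G] {a b : G} {n : ℕ} :
    (a * b) ^ n = 1 ↔ (b * a) ^ n = 1 := by
  rw [← mul_eq_right (b := a), mul_pow_mul, mul_eq_left]

theorem PresentedGroup.mulAut_ext {α : Type*} {rels : Set (FreeGroup α)}
    {φ ψ : MulAut (PresentedGroup rels)} (h : ∀ x, φ (.of x) = ψ (.of x)) : φ = ψ :=
  MulEquiv.toMonoidHom_injective (PresentedGroup.ext h)

namespace ABZ

@[simp] theorem ga_mul_ga : ga * ga = 1 := by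
  rw [← pow_two]
  exact PresentedGroup.one_of_mem (Or.inl rfl)

@[simp] theorem gb_mul_gb : gb * gb = 1 := by
  rw [← pow_two]
  exact PresentedGroup.one_of_mem (Or.inr rfl)

@[simp] theorem ga_mul_ga_mul (x : F) : ga * (ga * x) = x := by
  rw [← mul_assoc, ga_mul_ga, one_mul]

@[simp] theorem gb_mul_gb_mul (x : F) : gb * (gb * x) = x := by
  rw [← mul_assoc, gb_mul_gb, one_mul]

@[simp] theorem ga_inv : ga⁻¹ = ga := inv_eq_of_mul_eq_one_right ga_mul_ga

@[simp] theorem gb_inv : gb⁻¹ = gb := inv_eq_of_mul_eq_one_right gb_mul_gb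

theorem mulAut_ext {φ ψ : MulAut F} (ha : φ ga = ψ ga) (hb : φ gb = ψ gb) (ht : φ gt = ψ gt) :
    φ = ψ :=
  PresentedGroup.mulAut_ext fun | .a => ha | .b => hb | .t => ht

def IsOmega (ω : MulAut F) : Prop := ω ga = ga ∧ ω gb = gt * gt * gb * gt⁻¹ * gt⁻¹ ∧ ω gt = gt⁻¹

variable {τ L R χ ω : MulAut F}

theorem IsTau.isOmega_mul_chi_sq (hτ : IsTau τ) (hχ : IsChi χ) : IsOmega (τ * χ ^ 2) := by
  obtain ⟨hτa, hτb, hτt⟩ := hτ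
  obtain ⟨hχa, hχb, hχt⟩ := hχ
  refine ⟨?_, ?_, ?_⟩ <;> simp [pow_two, hτa, hτb, hτt, hχa, hχb, hχt, mul_assoc]

theorem IsL.mul_self (hL : IsL L) : L * L = 1 := by
  obtain ⟨ha, hb, ht⟩ := hL
  apply mulAut_ext <;> simp [ha, hb, ht]

theorem IsR.mul_self (hR : IsR R) : R * R = 1 := by
  obtain ⟨ha, hb, ht⟩ := hR
  apply mulAut_ext <;> simp [ha, hb, ht, mul_assoc]

theorem IsTau.mul_self (hτ : IsTau τ) : τ * τ = 1 := by
  obtain ⟨ha, hb, ht⟩ := hτ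
  apply mulAut_ext <;> simp [ha, hb, ht]

theorem IsOmega.mul_self (hω : IsOmega ω) : ω * ω = 1 := by
  obtain ⟨ha, hb, ht⟩ := hω
  apply mulAut_ext <;> simp [ha, hb, ht, mul_assoc]

theorem IsL.mul_pow_two_of_isR (hL : IsL L) (hR : IsR R) : (L * R) ^ 2 = 1 := by
  obtain ⟨hLa, hLb, hLt⟩ := hL
  obtain ⟨hRa, hRb, hRt⟩ := hR
  apply mulAut_ext <;> simp [pow_two, hLa, hLb, hLt, hRa, hRb, hRt, mul_assoc]

theorem IsL.mul_pow_four_of_isTau (hL : IsL L) (hτ : IsTau τ) : (L * τ) ^ 4 = 1 := by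
  obtain ⟨hLa, hLb, hLt⟩ := hL
  obtain ⟨hτa, hτb, hτt⟩ := hτ
  apply mulAut_ext <;> simp [pow_succ, hLa, hLb, hLt, hτa, hτb, hτt, mul_assoc]

theorem IsR.mul_pow_four_of_isTau (hR : IsR R) (hτ : IsTau τ) : (R * τ) ^ 4 = 1 := by
  obtain ⟨hRa, hRb, hRt⟩ := hR
  obtain ⟨hτa, hτb, hτt⟩ := hτ
  apply mulAut_ext <;> simp [pow_succ, hRa, hRb, hRt, hτa, hτb, hτt, mul_assoc]

theorem IsL.mul_pow_four_of_isOmega (hL : IsL L) (hω : IsOmega ω) : (L * ω) ^ 4 = 1 := by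
  obtain ⟨hLa, hLb, hLt⟩ := hL
  obtain ⟨hωa, hωb, hωt⟩ := hω
  apply mulAut_ext <;> simp [pow_succ, hLa, hLb, hLt, hωa, hωb, hωt, mul_assoc]

theorem IsR.mul_pow_four_of_isOmega (hR : IsR R) (hω : IsOmega ω) : (R * ω) ^ 4 = 1 := by
  obtain ⟨hRa, hRb, hRt⟩ := hR
  obtain ⟨hωa, hωb, hωt⟩ := hω
  apply mulAut_ext <;> simp [pow_succ, hRa, hRb, hRt, hωa, hωb, hωt, mul_assoc]

def coxeterGens (L R τ ω : MulAut F) : Idx → MulAut F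
  | .x => L | .y => R | .z => τ | .w => ω

theorem isLiftable_coxeterGens (hL : IsL L) (hR : IsR R) (hτ : IsTau τ) (hω : IsOmega ω) :
    CoxM.IsLiftable (coxeterGens L R τ ω) := by
  have hLR := hL.mul_pow_two_of_isR hR
  have hLτ := hL.mul_pow_four_of_isTau hτ
  have hRτ := hR.mul_pow_four_of_isTau hτ
  have hLω := hL.mul_pow_four_of_isOmega hω
  have hRω := hR.mul_pow_four_of_isOmega hω
  rintro (_ | _ | _ | _) (_ | _ | _ | _) <;>
    simp [coxeterGens, CoxM, Mfun, hL.mul_self, hR.mul_self, hτ.mul_self, hω.mul_self,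
      hLR, hLτ, hRτ, hLω, hRω, mul_pow_eq_one_comm.1]

/-- There is a group homomorphism `Φ : W → Out(F)` with `Φ(x) = [L]`, `Φ(y) = [R]`,
`Φ(z) = [τ]`, `Φ(w) = [τ ∘ χ²]`. -/
theorem exists_coxeter_hom (τ L R χ : MulAut F) (hτ : IsTau τ)
    (hL : IsL L) (hR : IsR R) (hχ : IsChi χ) :
    ∃ Φ : W →* Out F,
      Φ (CoxM.simple Idx.x) = out L ∧ Φ (CoxM.simple Idx.y) = out R ∧
      Φ (CoxM.simple Idx.z) = out τ ∧ Φ (CoxM.simple Idx.w) = out (τ * χ ^ 2) := by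
  have hf := isLiftable_coxeterGens hL hR hτ (hτ.isOmega_mul_chi_sq hχ)
  refine ⟨(QuotientGroup.mk' _).comp (CoxM.toCoxeterSystem.lift ⟨_, hf⟩), ?_, ?_, ?_, ?_⟩ <;>
    · rw [MonoidHom.comp_apply, ← CoxM.toCoxeterSystem_simple, CoxeterSystem.lift_apply_simple]
      rfl

end ABZ
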